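/- arXiv:1705.00758 — 2 statements merged into one kernel-verified Lean document; each statement's English description precedes it below -/
import Mathlib

section
/- Conversely, if w ∈ W^P satisfies ℓ(w s_γ) = ℓ(w) − ℓ(s_γ) and ℓ(w s'_γ) = ℓ(w) − ℓ(s'_γ) (equivalently Inv(w) ⊇ Inv(s_γ) and Inv(w s_γ) ⊇ R_P^+ \ R_Q^+), then wγ = −θ, i.e. w ∈ W(γ). -/
/- A combinatorial framework for reduced crystallographic root systems with a
chosen system of simple roots, realized inside a real inner product space.
Weyl group elements are represented as plain functions `V → V` that are
compositions of simple reflections; `len` is the Coxeter length. -/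

noncomputable section
open Classical
open scoped RealInnerProductSpace

namespace Pp

variable {V : Type*} [NormedAddCommGroup V] [InnerProductSpace ℝ V]

/-- The coroot pairing `⟨x, α^∨⟩ = 2⟨x,α⟩/⟨α,α⟩`. -/
def cpr (x α : V) : ℝ := 2 * ⟪x, α⟫ / ⟪α, α⟫

/-- The reflection `s_α`, as a plain function. -/
def sref (α : V) : V → V := fun x => x - cpr x α • α

/-- `w` is a product of `n` reflections in simple roots taken from `Δ`. -/
def IsWord (Δ : Finset V) (w : V → V) (n : ℕ) : Prop :=
  ∃ l : List V, l.length = n ∧ (∀ α ∈ l, α ∈ Δ) ∧ w = (l.map sref).foldr (· ∘ ·) id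

/-- The Weyl group generated by the simple reflections, as a set of functions. -/
def Weyl (Δ : Finset V) : Set (V → V) := { w | ∃ n, IsWord Δ w n }

/-- Coxeter length with respect to the simple system `Δ`. -/
def len (Δ : Finset V) (w : V → V) : ℕ := sInf { n | IsWord Δ w n }

/-- The positive roots: roots which are nonnegative combinations of the
simple roots in `Δ`.  For a sub-system `Δ' ⊆ Δ`, `Pos Φ Δ'` is the set of
positive roots supported on `Δ'`. -/
def Pos (Φ Δ : Finset V) : Finset V :=
  Φ.filter fun β => ∃ c : V → ℝ, (∀ α ∈ Δ, 0 ≤ c α) ∧ β = ∑ α ∈ Δ, c α • α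

/-- Half sum of positive roots. -/
def rho (Φ Δ : Finset V) : V := (2:ℝ)⁻¹ • ∑ β ∈ Pos Φ Δ, β

/-- The axioms of a reduced crystallographic root system `Φ` with simple
system `Δ`. -/
structure IsRS (Φ Δ : Finset V) : Prop where
  zero_not_mem : (0:V) ∉ Φ
  neg_mem : ∀ α ∈ Φ, -α ∈ Φ
  reduced : ∀ α ∈ Φ, ∀ t : ℝ, t • α ∈ (Φ : Set V) → t = 1 ∨ t = -1
  cryst : ∀ α ∈ Φ, ∀ β ∈ Φ, ∃ k : ℤ, (k : ℝ) = cpr α β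
  refl_mem : ∀ α ∈ Φ, ∀ β ∈ Φ, sref α β ∈ Φ
  simple_mem : ∀ α ∈ Δ, α ∈ Φ
  simple_indep : LinearIndependent ℝ (fun α : Δ => (α : V))
  pos_or_neg : ∀ β ∈ Φ, β ∈ Pos Φ Δ ∨ -β ∈ Pos Φ Δ

/-- `β` is a quantum root: `ℓ(s_β) = ⟨2ρ, β^∨⟩ - 1`. -/
def IsQuantum (Φ Δ : Finset V) (β : V) : Prop :=
  (len Δ (sref β) : ℝ) = cpr ((2:ℝ) • rho Φ Δ) β - 1

/-- Minimal length coset representatives `W^P`: elements of `W` mapping the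
positive roots of the parabolic (`Pos Φ ΔP`) to positive roots. -/
def MinRep (Φ Δ ΔP : Finset V) (w : V → V) : Prop :=
  w ∈ Weyl Δ ∧ ∀ β ∈ Pos Φ ΔP, w β ∈ Pos Φ Δ

/-- `θ` is the highest root. -/
def IsHighest (Φ Δ : Finset V) (θ : V) : Prop :=
  θ ∈ Pos Φ Δ ∧ ∀ β ∈ Φ, ∃ c : V → ℝ, (∀ α ∈ Δ, 0 ≤ c α) ∧ θ - β = ∑ α ∈ Δ, c α • α

/-- All roots have the same length. -/
def SimplyLaced (Φ : Finset V) : Prop := ∀ α ∈ Φ, ∀ β ∈ Φ, ⟪α, α⟫ = ⟪β, β⟫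

/-- The node `ι ∈ Δ` is minuscule: the coefficient of `α_ι^∨` in every coroot
is at most `1`. -/
def Minuscule (Φ Δ : Finset V) (ι : V) : Prop :=
  ∀ β ∈ Φ, ∀ c : V → ℝ,
    (2 / ⟪β, β⟫) • β = ∑ α ∈ Δ, c α • ((2 / ⟪α, α⟫) • α) → c ι ≤ 1

/-- The node `ι ∈ Δ` is cominuscule: the coefficient of `α_ι` in every
positive root is at most `1`. -/
def Cominuscule (Φ Δ : Finset V) (ι : V) : Prop :=
  ∀ β ∈ Pos Φ Δ, ∀ c : V → ℝ,
    ((∀ α ∈ Δ, 0 ≤ c α) ∧ β = ∑ α ∈ Δ, c α • α) → c ι ≤ 1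

/-- `(Φ, Δ)` is the root system of type `B_n` in the standard coordinates
given by the orthonormal family `e`. -/
def TypeBData (Φ Δ : Finset V) (n : ℕ) (e : Fin n → V) : Prop :=
  Orthonormal ℝ e ∧
  (Φ : Set V) =
    ({v | ∃ i j : Fin n, i ≠ j ∧ (v = e i - e j ∨ v = e i + e j ∨ v = -(e i + e j))} ∪
     {v | ∃ i : Fin n, v = e i ∨ v = -(e i)}) ∧
  (Δ : Set V) =
    ({v | ∃ i : Fin n, ∃ h : (i : ℕ) + 1 < n, v = e i - e ⟨(i : ℕ) + 1, h⟩} ∪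
     {v | ∃ h : 0 < n, v = e ⟨n - 1, by omega⟩})

/-- `(Φ, Δ)` is the root system of type `C_n` in the standard coordinates
given by the orthonormal family `e`. -/
def TypeCData (Φ Δ : Finset V) (n : ℕ) (e : Fin n → V) : Prop :=
  Orthonormal ℝ e ∧
  (Φ : Set V) =
    ({v | ∃ i j : Fin n, i ≠ j ∧ (v = e i - e j ∨ v = e i + e j ∨ v = -(e i + e j))} ∪
     {v | ∃ i : Fin n, v = (2:ℝ) • e i ∨ v = -((2:ℝ) • e i)}) ∧
  (Δ : Set V) =
    ({v | ∃ i : Fin n, ∃ h : (i : ℕ) + 1 < n, v = e i - e ⟨(i : ℕ) + 1, h⟩} ∪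
     {v | ∃ h : 0 < n, v = (2:ℝ) • e ⟨n - 1, by omega⟩})

/-- `γ` is the distinguished (quantum) root attached to the minuscule node
`ι`: `γ = α_ι` in the simply-laced case, `γ = α_{n-1} + 2α_n = e_{n-1} + e_n`
in type `B_n` (with `ι = n`), and `γ = θ = 2e_1` in type `C_n` (with `ι = 1`). -/
def DistinguishedGamma (Φ Δ : Finset V) (ι γ : V) : Prop :=
  (SimplyLaced Φ ∧ γ = ι) ∨
  (∃ n : ℕ, ∃ _h : 2 ≤ n, ∃ e : Fin n → V, TypeBData Φ Δ n e ∧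
    ι = e ⟨n - 1, by omega⟩ ∧ γ = e ⟨n - 2, by omega⟩ + e ⟨n - 1, by omega⟩) ∨
  (∃ n : ℕ, ∃ _h : 2 ≤ n, ∃ e : Fin n → V, TypeCData Φ Δ n e ∧
    ι = e ⟨0, by omega⟩ - e ⟨1, by omega⟩ ∧ γ = (2:ℝ) • e ⟨0, by omega⟩)

end Pp

/-!
The two length identities say that the inversion sets of `s_γ` and of
`s'_γ⁻¹ = w_{P/Q} s_γ` lie in `Inv(w)`. Since `ι` is minuscule and `γ` is a long root whose
coroot has coefficient `1` at `ι`, a positive root `p` with `p + tγ` a root for some `t ≥ 1`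
lies in `R_P^+`. Hence `w` sends every root `x` with `⟪x, γ⟫ > 0` to a negative root: if `x < 0`
then `-x ∈ R_P^+` stays positive under `w ∈ W^P`; if `x > 0` then either `s_γ x < 0`, or
`s_γ x = x - ⟨x, γ^∨⟩ γ` is positive, hence in `R_P^+`, and not orthogonal to `γ`, so it lies in
`R_P^+ \ R_Q^+` and `x ∈ Inv(w_{P/Q} s_γ)`.
Applied to `x = γ` and to `x = w⁻¹α` this makes `-wγ` a dominant root of maximal length, and the
only such root is `θ`.
-/

namespace Pp

variable {V : Type*} [NormedAddCommGroup V] [InnerProductSpace ℝ V]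

lemma cpr_add (x y α : V) : cpr (x + y) α = cpr x α + cpr y α := by
  unfold cpr; rw [inner_add_left]; ring

lemma cpr_sub (x y α : V) : cpr (x - y) α = cpr x α - cpr y α := by
  unfold cpr; rw [inner_sub_left]; ring

lemma cpr_smul (c : ℝ) (x α : V) : cpr (c • x) α = c * cpr x α := by
  unfold cpr; rw [real_inner_smul_left]; ring

lemma cpr_self {α : V} (h : ⟪α, α⟫ ≠ 0) : cpr α α = 2 := by
  unfold cpr; field_simp

lemma sref_apply (α x : V) : sref α x = x - cpr x α • α := rfl

lemma isLinearMap_sref (α : V) : IsLinearMap ℝ (sref α) where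
  map_add x y := by simp only [sref_apply, cpr_add, add_smul]; abel
  map_smul c x := by simp only [sref_apply, cpr_smul, mul_smul, smul_sub]

lemma sref_sref {α : V} (h : ⟪α, α⟫ ≠ 0) (x : V) : sref α (sref α x) = x := by
  simp only [sref_apply, cpr_sub, cpr_smul, cpr_self h]
  module

lemma sref_self {α : V} (h : ⟪α, α⟫ ≠ 0) : sref α α = -α := by
  simp only [sref_apply, cpr_self h]
  module

lemma inner_sref_sref {α : V} (h : ⟪α, α⟫ ≠ 0) (x y : V) :
    ⟪sref α x, sref α y⟫ = ⟪x, y⟫ := by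
  simp only [sref_apply, cpr, inner_sub_left, inner_sub_right, real_inner_smul_left,
    real_inner_smul_right, real_inner_comm α]
  field_simp
  ring

structure IsRootIsometry (Φ : Finset V) (f : V → V) : Prop where
  isLinearMap : IsLinearMap ℝ f
  inner_map_map : ∀ x y, ⟪f x, f y⟫ = ⟪x, y⟫
  map_mem : ∀ x ∈ Φ, f x ∈ Φ

namespace IsRootIsometry

variable {Φ : Finset V} {f g : V → V}

lemma id (Φ : Finset V) : IsRootIsometry Φ (id : V → V) :=
  ⟨⟨fun _ _ => rfl, fun _ _ => rfl⟩, fun _ _ => rfl, fun _ h => h⟩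

lemma comp (hf : IsRootIsometry Φ f) (hg : IsRootIsometry Φ g) : IsRootIsometry Φ (f ∘ g) where
  isLinearMap := ⟨fun x y => by simp [hg.isLinearMap.map_add, hf.isLinearMap.map_add],
    fun c x => by simp [hg.isLinearMap.map_smul, hf.isLinearMap.map_smul]⟩
  inner_map_map x y := by simp [hf.inner_map_map, hg.inner_map_map]
  map_mem x hx := hf.map_mem _ (hg.map_mem x hx)

lemma map_neg (hf : IsRootIsometry Φ f) (x : V) : f (-x) = -f x :=
  (IsLinearMap.mk' f hf.isLinearMap).map_neg x

lemma cpr_map_map (hf : IsRootIsometry Φ f) (x y : V) : cpr (f x) (f y) = cpr x y := by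
  unfold cpr; rw [hf.inner_map_map, hf.inner_map_map]

lemma comp_sref (hf : IsRootIsometry Φ f) (α : V) : f ∘ sref α = sref (f α) ∘ f := by
  funext x
  simp only [Function.comp_apply, sref_apply, hf.isLinearMap.map_sub, hf.isLinearMap.map_smul,
    hf.cpr_map_map]

end IsRootIsometry

def word (l : List V) : V → V := (l.map sref).foldr (· ∘ ·) id

@[simp] lemma word_nil : word ([] : List V) = id := rfl

lemma word_cons (a : V) (l : List V) : word (a :: l) = sref a ∘ word l := rfl

lemma word_append (l₁ l₂ : List V) : word (l₁ ++ l₂) = word l₁ ∘ word l₂ := by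
  induction l₁ with
  | nil => rfl
  | cons a l ih => rw [List.cons_append, word_cons, word_cons, ih]; rfl

lemma word_singleton (a : V) : word [a] = sref a := rfl

lemma isWord_word {Δ : Finset V} {l : List V} (hl : ∀ α ∈ l, α ∈ Δ) :
    IsWord Δ (word l) l.length :=
  ⟨l, rfl, hl, rfl⟩

def IsNonnegComb (Δ : Finset V) (v : V) : Prop :=
  ∃ c : V → ℝ, (∀ α ∈ Δ, 0 ≤ c α) ∧ v = ∑ α ∈ Δ, c α • α

namespace IsNonnegComb

variable {Δ : Finset V} {u v : V}

lemma zero : IsNonnegComb Δ (0 : V) :=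
  ⟨0, fun _ _ => le_rfl, by simp⟩

lemma add (hu : IsNonnegComb Δ u) (hv : IsNonnegComb Δ v) : IsNonnegComb Δ (u + v) := by
  obtain ⟨c, hc, rfl⟩ := hu
  obtain ⟨d, hd, rfl⟩ := hv
  exact ⟨c + d, fun α hα => add_nonneg (hc α hα) (hd α hα), by
    simp [add_smul, Finset.sum_add_distrib]⟩

lemma smul {t : ℝ} (ht : 0 ≤ t) (hv : IsNonnegComb Δ v) : IsNonnegComb Δ (t • v) := by
  obtain ⟨c, hc, rfl⟩ := hv
  exact ⟨t • c, fun α hα => mul_nonneg ht (hc α hα), by simp [Finset.smul_sum, mul_smul]⟩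

lemma of_mem {α : V} (hα : α ∈ Δ) : IsNonnegComb Δ α :=
  ⟨fun x => if x = α then 1 else 0, fun _ _ => by positivity, by simp [hα]⟩

lemma mono {Δ' : Finset V} (h : Δ' ⊆ Δ) (hv : IsNonnegComb Δ' v) : IsNonnegComb Δ v := by
  obtain ⟨c, hc, rfl⟩ := hv
  refine ⟨fun α => if α ∈ Δ' then c α else 0, fun α _ => ?_, ?_⟩
  · dsimp only
    split_ifs with hα
    exacts [hc α hα, le_rfl]
  · simp only [ite_smul, zero_smul, Finset.sum_ite_mem, Finset.inter_eq_right.mpr h]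

end IsNonnegComb

variable {Φ Δ : Finset V}

lemma mem_Pos_iff {Δ' : Finset V} {β : V} : β ∈ Pos Φ Δ' ↔ β ∈ Φ ∧ IsNonnegComb Δ' β :=
  Finset.mem_filter

lemma mem_of_mem_Pos {Δ' : Finset V} {β : V} (h : β ∈ Pos Φ Δ') : β ∈ Φ :=
  (mem_Pos_iff.mp h).1

lemma Pos_mono {Δ' : Finset V} (h : Δ' ⊆ Δ) : Pos Φ Δ' ⊆ Pos Φ Δ := fun _ hβ =>
  mem_Pos_iff.mpr ⟨mem_of_mem_Pos hβ, (mem_Pos_iff.mp hβ).2.mono h⟩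

namespace IsRS

lemma ne_zero (hRS : IsRS Φ Δ) {α : V} (hα : α ∈ Φ) : α ≠ 0 :=
  fun h => hRS.zero_not_mem (h ▸ hα)

lemma inner_self_pos (hRS : IsRS Φ Δ) {α : V} (hα : α ∈ Φ) : 0 < ⟪α, α⟫ :=
  real_inner_self_pos.mpr (hRS.ne_zero hα)

lemma inner_self_ne_zero (hRS : IsRS Φ Δ) {α : V} (hα : α ∈ Φ) : ⟪α, α⟫ ≠ 0 :=
  (hRS.inner_self_pos hα).ne'

lemma isRootIsometry_sref (hRS : IsRS Φ Δ) {α : V} (hα : α ∈ Φ) :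
    IsRootIsometry Φ (sref α) :=
  ⟨isLinearMap_sref α, inner_sref_sref (hRS.inner_self_ne_zero hα), hRS.refl_mem α hα⟩

lemma sref_comp_sref (hRS : IsRS Φ Δ) {α : V} (hα : α ∈ Φ) : sref α ∘ sref α = id :=
  funext (sref_sref (hRS.inner_self_ne_zero hα))

lemma isRootIsometry_word (hRS : IsRS Φ Δ) {l : List V} (hl : ∀ α ∈ l, α ∈ Δ) :
    IsRootIsometry Φ (word l) := by
  induction l with
  | nil => exact IsRootIsometry.id Φ
  | cons a l ih =>
    exact (hRS.isRootIsometry_sref (hRS.simple_mem a (hl a List.mem_cons_self))).comp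
      (ih fun β hβ => hl β (List.mem_cons_of_mem a hβ))

lemma word_reverse_comp_word (hRS : IsRS Φ Δ) {l : List V} (hl : ∀ α ∈ l, α ∈ Δ) :
    word l.reverse ∘ word l = id := by
  induction l with
  | nil => rfl
  | cons a l ih =>
    have ha := hRS.simple_mem a (hl a List.mem_cons_self)
    rw [List.reverse_cons, word_append, word_singleton, word_cons, Function.comp_assoc,
      ← Function.comp_assoc (sref a), hRS.sref_comp_sref ha, Function.id_comp,
      ih fun β hβ => hl β (List.mem_cons_of_mem a hβ)]

lemma coeff_eq_of_sum_eq (hRS : IsRS Φ Δ) {c d : V → ℝ}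
    (h : ∑ α ∈ Δ, c α • α = ∑ α ∈ Δ, d α • α) {α : V} (hα : α ∈ Δ) : c α = d α := by
  have h0 : ∑ α : Δ, (c α - d α) • (α : V) = 0 := by
    simp only [sub_smul, Finset.sum_sub_distrib, Finset.sum_coe_sort Δ (fun a => c a • a),
      Finset.sum_coe_sort Δ (fun a => d a • a), h, sub_self]
  exact sub_eq_zero.mp (linearIndependent_iff'.mp hRS.simple_indep _ _ h0 ⟨α, hα⟩ (by simp))

lemma eq_zero_of_isNonnegComb_neg (hRS : IsRS Φ Δ) {v : V} (h : IsNonnegComb Δ v)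
    (h' : IsNonnegComb Δ (-v)) : v = 0 := by
  obtain ⟨c, hc, rfl⟩ := h
  obtain ⟨d, hd, hdv⟩ := h'
  have hcd : ∀ α ∈ Δ, c α = -d α := fun α hα =>
    hRS.coeff_eq_of_sum_eq (c := c) (d := -d)
      (by simp only [Pi.neg_apply, neg_smul, Finset.sum_neg_distrib, ← hdv, neg_neg]) hα
  refine Finset.sum_eq_zero fun α hα => ?_
  rw [show c α = 0 by linarith [hcd α hα, hc α hα, hd α hα], zero_smul]

lemma neg_not_mem_Pos (hRS : IsRS Φ Δ) {β : V} (hβ : β ∈ Pos Φ Δ) : -β ∉ Pos Φ Δ :=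
  fun h => hRS.ne_zero (mem_of_mem_Pos hβ)
    (hRS.eq_zero_of_isNonnegComb_neg (mem_Pos_iff.mp hβ).2 (mem_Pos_iff.mp h).2)

lemma neg_mem_Pos_of_not_mem (hRS : IsRS Φ Δ) {β : V} (hβ : β ∈ Φ) (h : β ∉ Pos Φ Δ) :
    -β ∈ Pos Φ Δ :=
  (hRS.pos_or_neg β hβ).resolve_left h

lemma mem_Pos_of_mem (hRS : IsRS Φ Δ) {α : V} (hα : α ∈ Δ) : α ∈ Pos Φ Δ :=
  mem_Pos_iff.mpr ⟨hRS.simple_mem α hα, .of_mem hα⟩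

lemma exists_eq_smul_of_add_eq_smul (hRS : IsRS Φ Δ) {u v α : V} {k : ℝ} (hα : α ∈ Δ)
    (hu : IsNonnegComb Δ u) (hv : IsNonnegComb Δ v) (h : u + v = k • α) :
    ∃ t : ℝ, u = t • α := by
  obtain ⟨c, hc, rfl⟩ := hu
  obtain ⟨d, hd, rfl⟩ := hv
  have hsum : ∑ x ∈ Δ, (c + d) x • x = ∑ x ∈ Δ, (if x = α then k else 0) • x := by
    simpa [add_smul, Finset.sum_add_distrib, hα] using h
  have hcd : ∀ x ∈ Δ, c x + d x = if x = α then k else 0 := fun x hx =>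
    hRS.coeff_eq_of_sum_eq hsum hx
  refine ⟨c α, Finset.sum_eq_single α (fun x hx hxα => ?_) (absurd hα)⟩
  have := hcd x hx
  rw [if_neg hxα] at this
  rw [show c x = 0 by linarith [hc x hx, hd x hx], zero_smul]

lemma sref_mem_Pos (hRS : IsRS Φ Δ) {α β : V} (hα : α ∈ Δ) (hβ : β ∈ Pos Φ Δ)
    (hβα : β ≠ α) : sref α β ∈ Pos Φ Δ := by
  have hαΦ := hRS.simple_mem α hα
  by_contra hno
  have hneg := hRS.neg_mem_Pos_of_not_mem (hRS.refl_mem α hαΦ β (mem_of_mem_Pos hβ)) hno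
  obtain ⟨t, rfl⟩ := hRS.exists_eq_smul_of_add_eq_smul hα (mem_Pos_iff.mp hβ).2
    (mem_Pos_iff.mp hneg).2 (k := cpr β α) (by rw [sref_apply]; abel)
  rcases hRS.reduced α hαΦ t (mem_of_mem_Pos hβ) with rfl | rfl
  · exact hβα (one_smul ℝ α)
  · exact hRS.neg_not_mem_Pos hβ (by simpa using hRS.mem_Pos_of_mem hα)

end IsRS

lemma len_le_of_isWord {w : V → V} {n : ℕ} (h : IsWord Δ w n) : len Δ w ≤ n :=
  Nat.sInf_le h

lemma exists_word_of_mem_weyl {w : V → V} (hw : w ∈ Weyl Δ) :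
    ∃ l : List V, l.length = len Δ w ∧ (∀ α ∈ l, α ∈ Δ) ∧ w = word l :=
  Nat.sInf_mem (s := {n | IsWord Δ w n}) hw

lemma word_mem_weyl {l : List V} (hl : ∀ α ∈ l, α ∈ Δ) : word l ∈ Weyl Δ :=
  ⟨l.length, isWord_word hl⟩

lemma IsWord.comp {u v : V → V} {m n : ℕ} (hu : IsWord Δ u m) (hv : IsWord Δ v n) :
    IsWord Δ (u ∘ v) (m + n) := by
  obtain ⟨l₁, rfl, hl₁, rfl⟩ := hu
  obtain ⟨l₂, rfl, hl₂, rfl⟩ := hv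
  refine ⟨l₁ ++ l₂, List.length_append, fun α hα => ?_, (word_append l₁ l₂).symm⟩
  rcases List.mem_append.mp hα with h | h
  exacts [hl₁ α h, hl₂ α h]

lemma comp_mem_weyl {u v : V → V} (hu : u ∈ Weyl Δ) (hv : v ∈ Weyl Δ) : u ∘ v ∈ Weyl Δ :=
  let ⟨_, hm⟩ := hu
  let ⟨_, hn⟩ := hv
  ⟨_, hm.comp hn⟩

lemma len_comp_le {u v : V → V} (hu : u ∈ Weyl Δ) (hv : v ∈ Weyl Δ) :
    len Δ (u ∘ v) ≤ len Δ u + len Δ v :=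
  len_le_of_isWord ((Nat.sInf_mem (s := {n | IsWord Δ u n}) hu).comp
    (Nat.sInf_mem (s := {n | IsWord Δ v n}) hv))

lemma weyl_mono {Δ' : Finset V} (h : Δ' ⊆ Δ) : Weyl Δ' ⊆ Weyl Δ := by
  rintro w ⟨n, l, hn, hl, rfl⟩
  exact ⟨n, l, hn, fun α hα => h (hl α hα), rfl⟩

lemma sref_mem_weyl_of_mem {α : V} (hα : α ∈ Δ) : sref α ∈ Weyl Δ :=
  word_mem_weyl (l := [α]) (by simpa using hα)

lemma len_sref_le_one {α : V} (hα : α ∈ Δ) : len Δ (sref α) ≤ 1 :=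
  len_le_of_isWord (isWord_word (l := [α]) (by simpa using hα))

namespace IsRS

lemma isRootIsometry_of_mem_weyl (hRS : IsRS Φ Δ) {w : V → V} (hw : w ∈ Weyl Δ) :
    IsRootIsometry Φ w := by
  obtain ⟨l, -, hl, rfl⟩ := exists_word_of_mem_weyl hw
  exact hRS.isRootIsometry_word hl

lemma exists_comp_eq_id (hRS : IsRS Φ Δ) {w : V → V} (hw : w ∈ Weyl Δ) :
    ∃ s ∈ Weyl Δ, w ∘ s = id := by
  obtain ⟨l, -, hl, rfl⟩ := exists_word_of_mem_weyl hw
  have hl' : ∀ α ∈ l.reverse, α ∈ Δ := fun α hα => hl α (List.mem_reverse.mp hα)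
  refine ⟨word l.reverse, word_mem_weyl hl', ?_⟩
  simpa using hRS.word_reverse_comp_word hl'

lemma mem_weyl_of_comp_eq_id (hRS : IsRS Φ Δ) {s t : V → V} (ht : t ∈ Weyl Δ)
    (h : s ∘ t = id) : s ∈ Weyl Δ ∧ len Δ s ≤ len Δ t := by
  obtain ⟨l, hlen, hl, rfl⟩ := exists_word_of_mem_weyl ht
  have hl' : ∀ α ∈ l.reverse, α ∈ Δ := fun α hα => hl α (List.mem_reverse.mp hα)
  have hs : s = word l.reverse := by
    have h' : word l ∘ word l.reverse = id := by simpa using hRS.word_reverse_comp_word hl'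
    rw [← Function.comp_id s, ← h', ← Function.comp_assoc, h, Function.id_comp]
  subst hs
  exact ⟨word_mem_weyl hl', hlen ▸ List.length_reverse ▸ len_le_of_isWord (isWord_word hl')⟩

lemma len_eq_of_comp_eq_id (hRS : IsRS Φ Δ) {s t : V → V} (hs : s ∈ Weyl Δ)
    (ht : t ∈ Weyl Δ) (hst : s ∘ t = id) (hts : t ∘ s = id) : len Δ s = len Δ t :=
  le_antisymm (hRS.mem_weyl_of_comp_eq_id ht hst).2 (hRS.mem_weyl_of_comp_eq_id hs hts).2

/-- The exchange condition. Along a reduced word `w = s₁ ⋯ sₙ` look for the last suffix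
`v = s_{k+1} ⋯ sₙ` with `v α > 0`; then `s_k (v α) < 0` forces `v α = α_k`, so
`v s_α = s_k v` and `w s_α` is `w` with the letter `s_k` deleted. -/
lemma len_comp_sref_lt (hRS : IsRS Φ Δ) {w : V → V} (hw : w ∈ Weyl Δ) {α : V} (hα : α ∈ Δ)
    (hneg : -(w α) ∈ Pos Φ Δ) : len Δ (w ∘ sref α) < len Δ w := by
  obtain ⟨l, hlen, hl, rfl⟩ := exists_word_of_mem_weyl hw
  have hαP := hRS.mem_Pos_of_mem hα
  obtain ⟨k, hk, hk1⟩ := Nat.exists_not_and_succ_of_not_zero_of_exists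
    (p := fun k => word (l.drop k) α ∈ Pos Φ Δ)
    (by simpa using fun h => hRS.neg_not_mem_Pos h hneg) ⟨l.length, by simpa using hαP⟩
  have hkl : k < l.length := by
    by_contra! h
    exact hk (by simpa [List.drop_eq_nil_of_le h] using hαP)
  have hdrop := List.drop_eq_getElem_cons hkl
  have hβ : l[k] ∈ Δ := hl _ (List.getElem_mem hkl)
  have hv : IsRootIsometry Φ (word (l.drop (k + 1))) :=
    hRS.isRootIsometry_word fun x hx => hl x (List.mem_of_mem_drop hx)
  have hvα : word (l.drop (k + 1)) α = l[k] := by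
    by_contra hne
    exact hk (by rw [hdrop, word_cons]; exact hRS.sref_mem_Pos hβ hk1 hne)
  have hdel : word l ∘ sref α = word (l.eraseIdx k) := by
    rw [List.eraseIdx_eq_take_drop_succ, word_append, ← List.take_append_drop k l, word_append,
      List.take_append_drop, hdrop, word_cons, Function.comp_assoc, Function.comp_assoc,
      hv.comp_sref, hvα, ← Function.comp_assoc (sref l[k]),
      hRS.sref_comp_sref (hRS.simple_mem _ hβ), Function.id_comp]
  have := len_le_of_isWord (hdel ▸ isWord_word fun x hx => hl x (List.mem_of_mem_eraseIdx hx))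
  rw [List.length_eraseIdx_of_lt hkl] at this
  omega

end IsRS

def invSet (Φ Δ : Finset V) (f : V → V) : Finset V :=
  (Pos Φ Δ).filter fun β => -(f β) ∈ Pos Φ Δ

lemma mem_invSet {f : V → V} {β : V} :
    β ∈ invSet Φ Δ f ↔ β ∈ Pos Φ Δ ∧ -(f β) ∈ Pos Φ Δ :=
  Finset.mem_filter

namespace IsRS

lemma invSet_id (hRS : IsRS Φ Δ) : invSet Φ Δ (id : V → V) = ∅ :=
  Finset.eq_empty_of_forall_notMem fun _ hβ =>
    hRS.neg_not_mem_Pos (mem_invSet.mp hβ).1 (mem_invSet.mp hβ).2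

lemma mem_invSet_comp_sref_iff (hRS : IsRS Φ Δ) {v : V → V} {α β : V} (hα : α ∈ Δ)
    (hβ : β ∈ Pos Φ Δ) (hβα : β ≠ α) :
    β ∈ invSet Φ Δ (v ∘ sref α) ↔ sref α β ∈ invSet Φ Δ v := by
  simp only [mem_invSet, Function.comp_apply, hβ, hRS.sref_mem_Pos hα hβ hβα, true_and]

/-- If `ℓ(u s₁ ⋯ sₙ) = ℓ(u) + n`, then every prefix `s₁ ⋯ s_k` satisfies the same identity and
`u s₁ ⋯ s_{k-1} α_k > 0` (exchange condition), so each new inversion of `s₁ ⋯ s_k` stays an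
inversion of `u s₁ ⋯ s_k`. -/
lemma invSet_subset_invSet_comp_word (hRS : IsRS Φ Δ) {u : V → V} (hu : u ∈ Weyl Δ)
    {l : List V} (hl : ∀ α ∈ l, α ∈ Δ) (h : len Δ (u ∘ word l) = len Δ u + l.length) :
    invSet Φ Δ (word l) ⊆ invSet Φ Δ (u ∘ word l) := by
  induction l using List.reverseRecOn with
  | nil => simp [hRS.invSet_id]
  | append_singleton l a ih =>
    have hl₀ : ∀ α ∈ l, α ∈ Δ := fun α hα => hl α (List.mem_append_left _ hα)
    have ha : a ∈ Δ := hl a (by simp)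
    have hw₀ : u ∘ word l ∈ Weyl Δ := comp_mem_weyl hu (word_mem_weyl hl₀)
    rw [word_append, word_singleton, ← Function.comp_assoc] at h ⊢
    rw [List.length_append, List.length_singleton] at h
    have hle₁ := len_comp_le hw₀ (sref_mem_weyl_of_mem ha)
    have hle₂ := len_comp_le hu (word_mem_weyl hl₀)
    have hle₃ := len_sref_le_one ha
    have hle₄ := len_le_of_isWord (isWord_word hl₀)
    have hIH := ih hl₀ (by omega)
    have hpos : (u ∘ word l) a ∈ Pos Φ Δ := by
      by_contra hno
      have := hRS.len_comp_sref_lt hw₀ ha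
        (hRS.neg_mem_Pos_of_not_mem ((hRS.isRootIsometry_of_mem_weyl hw₀).map_mem a
          (hRS.simple_mem a ha)) hno)
      omega
    intro β hβ
    have hβP := (mem_invSet.mp hβ).1
    by_cases hβa : β = a
    · subst hβa
      refine mem_invSet.mpr ⟨hβP, ?_⟩
      rwa [Function.comp_apply, sref_self (hRS.inner_self_ne_zero (hRS.simple_mem β ha)),
        (hRS.isRootIsometry_of_mem_weyl hw₀).map_neg, neg_neg]
    · exact (hRS.mem_invSet_comp_sref_iff ha hβP hβa).mpr
        (hIH ((hRS.mem_invSet_comp_sref_iff ha hβP hβa).mp hβ))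

lemma invSet_subset_invSet_comp (hRS : IsRS Φ Δ) {u v : V → V} (hu : u ∈ Weyl Δ)
    (hv : v ∈ Weyl Δ) (h : len Δ (u ∘ v) = len Δ u + len Δ v) :
    invSet Φ Δ v ⊆ invSet Φ Δ (u ∘ v) := by
  obtain ⟨l, hlen, hl, rfl⟩ := exists_word_of_mem_weyl hv
  exact hRS.invSet_subset_invSet_comp_word hu hl (hlen ▸ h)

lemma invSet_subset_of_len_comp_add (hRS : IsRS Φ Δ) {w s t : V → V} (hw : w ∈ Weyl Δ)
    (ht : t ∈ Weyl Δ) (hst : s ∘ t = id) (hts : t ∘ s = id)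
    (h : len Δ (w ∘ s) + len Δ s = len Δ w) : invSet Φ Δ t ⊆ invSet Φ Δ w := by
  have hs := hRS.mem_weyl_of_comp_eq_id ht hst
  have hw' : (w ∘ s) ∘ t = w := by rw [Function.comp_assoc, hst, Function.comp_id]
  rw [hRS.len_eq_of_comp_eq_id hs.1 ht hst hts] at h
  simpa only [hw'] using
    hRS.invSet_subset_invSet_comp (comp_mem_weyl hw hs.1) ht (by rw [hw', h])

lemma exists_inner_pos (hRS : IsRS Φ Δ) {γ : V} (hγ : γ ∈ Pos Φ Δ) :
    ∃ α ∈ Δ, 0 < ⟪γ, α⟫ := by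
  obtain ⟨c, hc, hcγ⟩ := (mem_Pos_iff.mp hγ).2
  by_contra! h
  have : ⟪γ, γ⟫ ≤ 0 := by
    nth_rw 2 [hcγ]
    rw [inner_sum]
    exact Finset.sum_nonpos fun α hα => by
      rw [real_inner_smul_right]; exact mul_nonpos_of_nonneg_of_nonpos (hc α hα) (h α hα)
  exact (hRS.inner_self_pos (mem_of_mem_Pos hγ)).not_ge this

/-- Induction on the number of positive roots below `γ`: if `⟪γ, α⟫ > 0` for a simple `α ≠ γ`,
then `s_α γ = γ - ⟨γ, α^∨⟩ α` is a smaller positive root and `s_γ = s_α s_{s_α γ} s_α`. -/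
lemma sref_mem_weyl (hRS : IsRS Φ Δ) {γ : V} (hγ : γ ∈ Pos Φ Δ) : sref γ ∈ Weyl Δ := by
  induction hn : ((Pos Φ Δ).filter fun β => IsNonnegComb Δ (γ - β)).card
    using Nat.strong_induction_on generalizing γ with
  | _ n ih =>
    by_cases hγΔ : γ ∈ Δ
    · exact sref_mem_weyl_of_mem hγΔ
    obtain ⟨α, hα, hγα⟩ := hRS.exists_inner_pos hγ
    have hαΦ := hRS.simple_mem α hα
    have hk : 0 < cpr γ α := div_pos (by linarith) (hRS.inner_self_pos hαΦ)
    have hγ' := hRS.sref_mem_Pos hα hγ (fun h => hγΔ (h ▸ hα))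
    have hlt : ((Pos Φ Δ).filter fun β => IsNonnegComb Δ (sref α γ - β)).card < n := by
      rw [← hn]
      refine Finset.card_lt_card (Finset.ssubset_iff_of_subset (fun β hβ => ?_) |>.mpr ⟨γ, ?_, ?_⟩)
      · rw [Finset.mem_filter] at hβ ⊢
        refine ⟨hβ.1, ?_⟩
        convert hβ.2.add ((IsNonnegComb.of_mem hα).smul hk.le) using 1
        rw [sref_apply]
        abel
      · simpa [hγ] using IsNonnegComb.zero
      · rw [Finset.mem_filter, sref_apply, sub_sub_cancel_left]
        rintro ⟨-, h⟩
        have := hRS.eq_zero_of_isNonnegComb_neg ((IsNonnegComb.of_mem hα).smul hk.le) h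
        exact hRS.ne_zero hαΦ ((smul_eq_zero.mp this).resolve_left hk.ne')
    have hconj := (hRS.isRootIsometry_sref hαΦ).comp_sref γ
    have hsγ : sref γ = sref α ∘ sref (sref α γ) ∘ sref α := by
      rw [← hconj, ← Function.comp_assoc, hRS.sref_comp_sref hαΦ, Function.id_comp]
    rw [hsγ]
    exact comp_mem_weyl (sref_mem_weyl_of_mem hα)
      (comp_mem_weyl (ih _ hlt hγ' rfl) (sref_mem_weyl_of_mem hα))

end IsRS

lemma inner_nonneg_of_isNonnegComb {v b : V} (hv : IsNonnegComb Δ v)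
    (hb : ∀ α ∈ Δ, 0 ≤ ⟪b, α⟫) : 0 ≤ ⟪v, b⟫ := by
  obtain ⟨c, hc, rfl⟩ := hv
  rw [sum_inner]
  exact Finset.sum_nonneg fun α hα => by
    rw [real_inner_smul_left, real_inner_comm]; exact mul_nonneg (hc α hα) (hb α hα)

namespace IsRS

lemma one_le_cpr (hRS : IsRS Φ Δ) {x γ : V} (hx : x ∈ Φ) (hγ : γ ∈ Φ) (h : 0 < ⟪x, γ⟫) :
    1 ≤ cpr x γ := by
  obtain ⟨k, hk⟩ := hRS.cryst x hx γ hγ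
  have hpos : (0 : ℝ) < k := hk ▸ div_pos (by linarith) (hRS.inner_self_pos hγ)
  have : (0 : ℤ) < k := by exact_mod_cast hpos
  rw [← hk]
  exact_mod_cast (show (1 : ℤ) ≤ k by omega)

lemma inner_nonneg_of_isHighest (hRS : IsRS Φ Δ) {θ : V} (hθ : IsHighest Φ Δ θ) {α : V}
    (hα : α ∈ Δ) : 0 ≤ ⟪θ, α⟫ := by
  have hαΦ := hRS.simple_mem α hα
  by_contra! hneg
  have hk : cpr θ α < 0 := div_neg_of_neg_of_pos (by linarith) (hRS.inner_self_pos hαΦ)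
  obtain ⟨c, hc, hcθ⟩ := hθ.2 _ (hRS.refl_mem α hαΦ θ (mem_of_mem_Pos hθ.1))
  have h : IsNonnegComb Δ (cpr θ α • α) := ⟨c, hc, by rw [← hcθ, sref_apply, sub_sub_cancel]⟩
  have := hRS.eq_zero_of_isNonnegComb_neg h
    (by simpa [neg_smul] using (IsNonnegComb.of_mem hα).smul (neg_nonneg.mpr hk.le))
  exact hRS.ne_zero hαΦ ((smul_eq_zero.mp this).resolve_left hk.ne)

/-- `θ - b ≥ 0` pairs nonnegatively with both dominant weights `θ` and `b`, while
`⟪θ - b, θ⟫ + ⟪θ - b, b⟫ = |θ|² - |b|² ≤ 0`. -/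
lemma eq_of_isHighest_of_inner_nonneg (hRS : IsRS Φ Δ) {θ b : V} (hθ : IsHighest Φ Δ θ)
    (hb : b ∈ Φ) (hdom : ∀ α ∈ Δ, 0 ≤ ⟪b, α⟫) (hle : ⟪θ, θ⟫ ≤ ⟪b, b⟫) : θ = b := by
  have hθb : IsNonnegComb Δ (θ - b) := hθ.2 b hb
  have h₁ := inner_nonneg_of_isNonnegComb hθb fun α hα => hRS.inner_nonneg_of_isHighest hθ hα
  have h₂ := inner_nonneg_of_isNonnegComb hθb hdom
  have hsum : ⟪θ - b, θ⟫ + ⟪θ - b, b⟫ = ⟪θ, θ⟫ - ⟪b, b⟫ := by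
    simp only [inner_sub_left, real_inner_comm b θ]; ring
  have hzero : ⟪θ - b, θ - b⟫ = 0 := by rw [inner_sub_right]; linarith
  exact sub_eq_zero.mp (inner_self_eq_zero.mp hzero)

end IsRS

lemma Minuscule.coeff_mul_inner_self_le {ι : V} (hmin : Minuscule Φ Δ ι) (hRS : IsRS Φ Δ)
    {x : V} (hx : x ∈ Φ) {c : V → ℝ} (hc : x = ∑ α ∈ Δ, c α • α) :
    c ι * ⟪ι, ι⟫ ≤ ⟪x, x⟫ := by
  have hxx := hRS.inner_self_pos hx
  have hcoroot : (2 / ⟪x, x⟫) • x =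
      ∑ α ∈ Δ, (c α * ⟪α, α⟫ / ⟪x, x⟫) • ((2 / ⟪α, α⟫) • α) := by
    rw [hc, Finset.smul_sum]
    refine Finset.sum_congr rfl fun α hα => ?_
    have := hRS.inner_self_ne_zero (hRS.simple_mem α hα)
    rw [smul_smul, smul_smul]
    congr 1
    field_simp
  have := hmin x hx _ hcoroot
  rwa [div_le_one hxx] at this

/-- `γ` is a long positive root whose coroot has coefficient `1` at `ι^∨`. -/
structure LongRootAt (Φ Δ : Finset V) (ι γ : V) : Prop where
  mem_Pos : γ ∈ Pos Φ Δ
  inner_self_le : ∀ x ∈ Φ, ⟪x, x⟫ ≤ ⟪γ, γ⟫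
  coeff_mul_inner_self : ∀ c : V → ℝ, γ = ∑ α ∈ Δ, c α • α → c ι * ⟪ι, ι⟫ = ⟪γ, γ⟫

lemma mem_Pos_erase_of_coeff_eq_zero {ι p : V} (hι : ι ∈ Δ) (hp : p ∈ Φ) {c : V → ℝ}
    (hc : ∀ α ∈ Δ, 0 ≤ c α) (hcp : p = ∑ α ∈ Δ, c α • α) (hcι : c ι = 0) :
    p ∈ Pos Φ (Δ.erase ι) := by
  refine mem_Pos_iff.mpr ⟨hp, c, fun α hα => hc α (Finset.mem_of_mem_erase hα), ?_⟩
  rwa [← Finset.sum_erase_add _ _ hι, hcι, zero_smul, add_zero] at hcp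

/-- Minusculity bounds the `ι`-coefficient of the coroot of `p + tγ` by `1`, which the coroot
of `γ` alone already attains. -/
lemma LongRootAt.mem_Pos_erase_of_add_smul_mem {ι γ : V} (hγ : LongRootAt Φ Δ ι γ)
    (hRS : IsRS Φ Δ) (hι : ι ∈ Δ) (hmin : Minuscule Φ Δ ι) {p : V} (hp : p ∈ Pos Φ Δ)
    {t : ℝ} (ht : 1 ≤ t) (hpt : p + t • γ ∈ Φ) : p ∈ Pos Φ (Δ.erase ι) := by
  obtain ⟨c, hc, hcp⟩ := (mem_Pos_iff.mp hp).2
  obtain ⟨d, -, hdγ⟩ := (mem_Pos_iff.mp hγ.mem_Pos).2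
  have hsum : p + t • γ = ∑ α ∈ Δ, (c α + t * d α) • α := by
    simp only [add_smul, mul_smul, Finset.sum_add_distrib, ← Finset.smul_sum, ← hcp, ← hdγ]
  have h₁ := hmin.coeff_mul_inner_self_le hRS hpt hsum
  have h₂ := hγ.inner_self_le _ hpt
  have h₃ := hγ.coeff_mul_inner_self d hdγ
  have hγγ := hRS.inner_self_pos (mem_of_mem_Pos hγ.mem_Pos)
  have hιι := hRS.inner_self_pos (hRS.simple_mem ι hι)
  have hcι : c ι = 0 := by
    nlinarith [hc ι hι, mul_nonneg (hc ι hι) hιι.le, mul_nonneg (sub_nonneg.mpr ht) hγγ.le]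
  exact mem_Pos_erase_of_coeff_eq_zero hι (mem_of_mem_Pos hp) hc hcp hcι

lemma inner_sref_self {γ : V} (hγ : ⟪γ, γ⟫ ≠ 0) (x : V) : ⟪sref γ x, γ⟫ = -⟪x, γ⟫ := by
  rw [← inner_sref_sref hγ, sref_sref hγ, sref_self hγ, inner_neg_right]

lemma inner_eq_zero_of_mem_Pos_filter {Δ' : Finset V} {γ v : V} (hγ : ⟪γ, γ⟫ ≠ 0)
    (hv : v ∈ Pos Φ (Δ'.filter fun j => cpr j γ = 0)) : ⟪v, γ⟫ = 0 := by
  obtain ⟨-, c, -, rfl⟩ := mem_Pos_iff.mp hv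
  rw [sum_inner]
  refine Finset.sum_eq_zero fun j hj => ?_
  have hj : 2 * ⟪j, γ⟫ / ⟪γ, γ⟫ = 0 := (Finset.mem_filter.mp hj).2
  have hjγ : ⟪j, γ⟫ = 0 := by simpa [inner_self_ne_zero.mp hγ] using hj
  rw [real_inner_smul_left, hjγ, mul_zero]

lemma LongRootAt.neg_apply_mem_Pos_of_inner_pos {ι γ : V} (hγ : LongRootAt Φ Δ ι γ)
    (hRS : IsRS Φ Δ) (hι : ι ∈ Δ) (hmin : Minuscule Φ Δ ι) {w : V → V}
    (hw : MinRep Φ Δ (Δ.erase ι) w) (hsγ : invSet Φ Δ (sref γ) ⊆ invSet Φ Δ w)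
    (hsγ' : ∀ x ∈ Pos Φ Δ, 0 < ⟪x, γ⟫ → sref γ x ∈ Pos Φ (Δ.erase ι) → x ∈ invSet Φ Δ w)
    {x : V} (hx : x ∈ Φ) (hxγ : 0 < ⟪x, γ⟫) : -(w x) ∈ Pos Φ Δ := by
  have hγΦ := mem_of_mem_Pos hγ.mem_Pos
  have hk := hRS.one_le_cpr hx hγΦ hxγ
  have hsx : sref γ x ∈ Φ := hRS.refl_mem γ hγΦ x hx
  rcases hRS.pos_or_neg x hx with hxP | hxN
  · by_cases hy : sref γ x ∈ Pos Φ Δ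
    · refine (mem_invSet.mp (hsγ' x hxP hxγ ?_)).2
      exact hγ.mem_Pos_erase_of_add_smul_mem hRS hι hmin hy hk (by rwa [sref_apply, sub_add_cancel])
    · exact (mem_invSet.mp (hsγ (mem_invSet.mpr ⟨hxP, hRS.neg_mem_Pos_of_not_mem hsx hy⟩))).2
  · have hz := hγ.mem_Pos_erase_of_add_smul_mem hRS hι hmin hxN hk
      (by simpa [sref_apply, neg_add_eq_sub] using hRS.neg_mem _ hsx)
    simpa [(hRS.isRootIsometry_of_mem_weyl hw.1).map_neg] using hw.2 _ hz

lemma IsRS.inner_neg_apply_nonneg (hRS : IsRS Φ Δ) {w : V → V} (hw : w ∈ Weyl Δ) {γ : V}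
    (h : ∀ x ∈ Φ, 0 < ⟪x, γ⟫ → -(w x) ∈ Pos Φ Δ) {α : V} (hα : α ∈ Δ) :
    0 ≤ ⟪-(w γ), α⟫ := by
  obtain ⟨s, hs, hws⟩ := hRS.exists_comp_eq_id hw
  have hwsα : w (s α) = α := congrFun hws α
  by_contra! hneg
  have hpos : 0 < ⟪s α, γ⟫ := by
    rw [← (hRS.isRootIsometry_of_mem_weyl hw).inner_map_map, hwsα, real_inner_comm]
    rw [inner_neg_left] at hneg
    linarith
  have := h _ ((hRS.isRootIsometry_of_mem_weyl hs).map_mem α (hRS.simple_mem α hα)) hpos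
  rw [hwsα] at this
  exact hRS.neg_not_mem_Pos (hRS.mem_Pos_of_mem hα) this

lemma inner_eq_coeff_mul {ι ϖ v : V} (hι : ι ∈ Δ) (hϖ : ∀ α ∈ Δ, α ≠ ι → ⟪α, ϖ⟫ = 0)
    {c : V → ℝ} (hv : v = ∑ α ∈ Δ, c α • α) : ⟪v, ϖ⟫ = c ι * ⟪ι, ϖ⟫ := by
  rw [hv, sum_inner, Finset.sum_eq_single ι (fun α hα hαι => by
    rw [real_inner_smul_left, hϖ α hα hαι, mul_zero]) (absurd hι), real_inner_smul_left]

/-- `ϖ` plays the role of the fundamental coweight of `ι`: it reads off `ι`-coefficients. -/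
lemma longRootAt_of_coweight {ι γ : V} (hRS : IsRS Φ Δ) (hι : ι ∈ Δ) (hγ : γ ∈ Φ)
    (hlong : ∀ x ∈ Φ, ⟪x, x⟫ ≤ ⟪γ, γ⟫) (ϖ : V) (hϖ : ∀ α ∈ Δ, α ≠ ι → ⟪α, ϖ⟫ = 0)
    (hιϖ : 0 < ⟪ι, ϖ⟫) (hγϖ : ⟪γ, ϖ⟫ * ⟪ι, ι⟫ = ⟪γ, γ⟫ * ⟪ι, ϖ⟫) : LongRootAt Φ Δ ι γ := by
  have hιι := hRS.inner_self_pos (hRS.simple_mem ι hι)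
  have hγγ := hRS.inner_self_pos hγ
  refine ⟨?_, hlong, fun c hc => ?_⟩
  · by_contra hno
    obtain ⟨c, hc, hcγ⟩ := (mem_Pos_iff.mp (hRS.neg_mem_Pos_of_not_mem hγ hno)).2
    have := inner_eq_coeff_mul hι hϖ hcγ
    rw [inner_neg_left] at this
    have hγϖpos : 0 < ⟪γ, ϖ⟫ := by nlinarith [mul_pos hγγ hιϖ]
    linarith [mul_nonneg (hc ι hι) hιϖ.le]
  · have := inner_eq_coeff_mul hι hϖ hc
    exact mul_right_cancel₀ hιϖ.ne' (by rw [← hγϖ, this]; ring)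

lemma longRootAt_of_simplyLaced {ι : V} (hRS : IsRS Φ Δ) (hι : ι ∈ Δ) (hSL : SimplyLaced Φ) :
    LongRootAt Φ Δ ι ι := by
  refine ⟨hRS.mem_Pos_of_mem hι, fun x hx => (hSL x hx ι (hRS.simple_mem ι hι)).le,
    fun c hc => ?_⟩
  have := hRS.coeff_eq_of_sum_eq (d := fun α => if α = ι then 1 else 0)
    (by rw [← hc]; simp [hι]) hι
  rw [this, if_pos rfl, one_mul]

section Coordinates

variable {n : ℕ} {e : Fin n → V}

lemma inner_sub_self_of_orthonormal (he : Orthonormal ℝ e) {i j : Fin n} (hij : i ≠ j) :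
    ⟪e i - e j, e i - e j⟫ = 2 := by
  simp only [inner_sub_left, inner_sub_right, orthonormal_iff_ite.mp he, if_neg hij,
    if_neg hij.symm]
  norm_num

lemma inner_add_self_of_orthonormal (he : Orthonormal ℝ e) {i j : Fin n} (hij : i ≠ j) :
    ⟪e i + e j, e i + e j⟫ = 2 := by
  simp only [inner_add_left, inner_add_right, orthonormal_iff_ite.mp he, if_neg hij,
    if_neg hij.symm]
  norm_num

lemma inner_self_of_orthonormal (he : Orthonormal ℝ e) (i : Fin n) : ⟪e i, e i⟫ = 1 := by
  rw [orthonormal_iff_ite.mp he, if_pos rfl]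

lemma inner_sum_of_orthonormal (he : Orthonormal ℝ e) (i : Fin n) : ⟪e i, ∑ j, e j⟫ = 1 := by
  simp [inner_sum, orthonormal_iff_ite.mp he]

lemma TypeBData.inner_self_le (h : TypeBData Φ Δ n e) {x : V} (hx : x ∈ Φ) : ⟪x, x⟫ ≤ 2 := by
  rw [← Finset.mem_coe, h.2.1] at hx
  rcases hx with ⟨i, j, hij, rfl | rfl | rfl⟩ | ⟨i, rfl | rfl⟩
  · rw [inner_sub_self_of_orthonormal h.1 hij]
  · rw [inner_add_self_of_orthonormal h.1 hij]
  · rw [inner_neg_neg, inner_add_self_of_orthonormal h.1 hij]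
  · rw [inner_self_of_orthonormal h.1]; norm_num
  · rw [inner_neg_neg, inner_self_of_orthonormal h.1]; norm_num

lemma TypeCData.inner_self_le (h : TypeCData Φ Δ n e) {x : V} (hx : x ∈ Φ) : ⟪x, x⟫ ≤ 4 := by
  have h2 : ∀ i, ⟪(2 : ℝ) • e i, (2 : ℝ) • e i⟫ = 4 := fun i => by
    rw [real_inner_smul_left, real_inner_smul_right, inner_self_of_orthonormal h.1]; norm_num
  rw [← Finset.mem_coe, h.2.1] at hx
  rcases hx with ⟨i, j, hij, rfl | rfl | rfl⟩ | ⟨i, rfl | rfl⟩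
  · rw [inner_sub_self_of_orthonormal h.1 hij]; norm_num
  · rw [inner_add_self_of_orthonormal h.1 hij]; norm_num
  · rw [inner_neg_neg, inner_add_self_of_orthonormal h.1 hij]; norm_num
  · rw [h2]
  · rw [inner_neg_neg, h2]

lemma TypeBData.longRootAt (hRS : IsRS Φ Δ) (h : TypeBData Φ Δ n e) (hn : 2 ≤ n) :
    LongRootAt Φ Δ (e ⟨n - 1, by omega⟩) (e ⟨n - 2, by omega⟩ + e ⟨n - 1, by omega⟩) := by
  have hne : (⟨n - 2, by omega⟩ : Fin n) ≠ ⟨n - 1, by omega⟩ := by rw [Ne, Fin.mk.injEq]; omega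
  have hι : e ⟨n - 1, by omega⟩ ∈ Δ := by
    rw [← Finset.mem_coe, h.2.2]; exact Or.inr ⟨by omega, rfl⟩
  have hγ : e ⟨n - 2, by omega⟩ + e ⟨n - 1, by omega⟩ ∈ Φ := by
    rw [← Finset.mem_coe, h.2.1]; exact Or.inl ⟨_, _, hne, Or.inr (Or.inl rfl)⟩
  refine longRootAt_of_coweight hRS hι hγ (fun x hx => ?_) (∑ j, e j) (fun α hα hαι => ?_)
    (by rw [inner_sum_of_orthonormal h.1]; norm_num) ?_
  · rw [inner_add_self_of_orthonormal h.1 hne]; exact h.inner_self_le hx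
  · rw [← Finset.mem_coe, h.2.2] at hα
    rcases hα with ⟨i, hi, rfl⟩ | ⟨_, rfl⟩
    · simp only [inner_sub_left, inner_sum_of_orthonormal h.1, sub_self]
    · exact absurd rfl hαι
  · simp only [inner_add_left, inner_sum_of_orthonormal h.1, inner_self_of_orthonormal h.1,
      inner_add_self_of_orthonormal h.1 hne]
    norm_num

lemma TypeCData.longRootAt (hRS : IsRS Φ Δ) (h : TypeCData Φ Δ n e) (hn : 2 ≤ n) :
    LongRootAt Φ Δ (e ⟨0, by omega⟩ - e ⟨1, by omega⟩) ((2 : ℝ) • e ⟨0, by omega⟩) := by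
  have hne : (⟨0, by omega⟩ : Fin n) ≠ ⟨1, by omega⟩ := by simp [Fin.ext_iff]
  have he := orthonormal_iff_ite.mp h.1
  have hι : e ⟨0, by omega⟩ - e ⟨1, by omega⟩ ∈ Δ := by
    rw [← Finset.mem_coe, h.2.2]; exact Or.inl ⟨⟨0, by omega⟩, by simp; omega, rfl⟩
  have hγ : (2 : ℝ) • e ⟨0, by omega⟩ ∈ Φ := by
    rw [← Finset.mem_coe, h.2.1]; exact Or.inr ⟨_, Or.inl rfl⟩
  refine longRootAt_of_coweight hRS hι hγ (fun x hx => ?_) (e ⟨0, by omega⟩)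
    (fun α hα hαι => ?_) ?_ ?_
  · rw [real_inner_smul_left, real_inner_smul_right, inner_self_of_orthonormal h.1]
    linarith [h.inner_self_le hx]
  · rw [← Finset.mem_coe, h.2.2] at hα
    rcases hα with ⟨i, hi, rfl⟩ | ⟨_, rfl⟩
    · by_cases hi0 : (i : ℕ) = 0
      · obtain ⟨i, hi'⟩ := i
        obtain rfl : i = 0 := hi0
        exact absurd rfl hαι
      · simp [inner_sub_left, he, Fin.ext_iff, hi0]
    · simp only [real_inner_smul_left, he, Fin.ext_iff, mul_ite, mul_one, mul_zero,
        ite_eq_right_iff, OfNat.ofNat_ne_zero, imp_false]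
      omega
  · rw [inner_sub_left, inner_self_of_orthonormal h.1, he, if_neg hne.symm]; norm_num
  · simp only [real_inner_smul_left, real_inner_smul_right, inner_self_of_orthonormal h.1,
      inner_sub_self_of_orthonormal h.1 hne, inner_sub_left, he, if_neg hne.symm]
    norm_num

end Coordinates

lemma DistinguishedGamma.longRootAt {ι γ : V} (hRS : IsRS Φ Δ) (hι : ι ∈ Δ)
    (hγ : DistinguishedGamma Φ Δ ι γ) : LongRootAt Φ Δ ι γ := by
  rcases hγ with ⟨hSL, rfl⟩ | ⟨n, hn, e, h, rfl, rfl⟩ | ⟨n, hn, e, h, rfl, rfl⟩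
  · exact longRootAt_of_simplyLaced hRS hι hSL
  · exact h.longRootAt hRS hn
  · exact h.longRootAt hRS hn

lemma mem_invSet_comp_sref_of_inner_pos {ι γ : V} (hγ : ⟪γ, γ⟫ ≠ 0) {u : V → V}
    (hu : ∀ β ∈ Pos Φ Δ, (-(u β) ∈ Pos Φ Δ ↔
      (β ∈ Pos Φ (Δ.erase ι) ∧ β ∉ Pos Φ ((Δ.erase ι).filter fun j => cpr j γ = 0))))
    {x : V} (hx : x ∈ Pos Φ Δ) (hxγ : 0 < ⟪x, γ⟫) (hy : sref γ x ∈ Pos Φ (Δ.erase ι)) :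
    x ∈ invSet Φ Δ (u ∘ sref γ) := by
  refine mem_invSet.mpr ⟨hx, (hu _ (Pos_mono (Finset.erase_subset ι Δ) hy)).mpr ⟨hy, fun hQ => ?_⟩⟩
  have := inner_eq_zero_of_mem_Pos_filter hγ hQ
  rw [inner_sref_self hγ] at this
  linarith

end Pp

open Pp in
/-- Converse part of Proposition 2.3: if `w ∈ W^P` satisfies
`ℓ(w s_γ) = ℓ(w) - ℓ(s_γ)` and `ℓ(w s'_γ) = ℓ(w) - ℓ(s'_γ)`
(both stated additively), then `wγ = -θ`, i.e. `w ∈ W(γ)`. -/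
theorem stmt8 {V : Type*} [NormedAddCommGroup V] [InnerProductSpace ℝ V]
    (Φ Δ : Finset V) (hRS : IsRS Φ Δ) (ι : V) (hι : ι ∈ Δ)
    (hmin : Minuscule Φ Δ ι)
    (γ : V) (hγ : DistinguishedGamma Φ Δ ι γ)
    (θ : V) (hθ : IsHighest Φ Δ θ)
    (wPQ wPQi : V → V)
    (hwPQ : wPQ ∈ Weyl (Δ.erase ι))
    (hinv : wPQ ∘ wPQi = id ∧ wPQi ∘ wPQ = id)
    (hInvSet : ∀ β ∈ Pos Φ Δ, (-(wPQ β) ∈ Pos Φ Δ ↔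
        (β ∈ Pos Φ (Δ.erase ι) ∧
         β ∉ Pos Φ ((Δ.erase ι).filter fun j => cpr j γ = 0))))
    (w : V → V) (hw : MinRep Φ Δ (Δ.erase ι) w)
    (h1 : len Δ (w ∘ sref γ) + len Δ (sref γ) = len Δ w)
    (h2 : len Δ (w ∘ (sref γ ∘ wPQi)) + len Δ (sref γ ∘ wPQi) = len Δ w) :
    w γ = -θ := by
  have hγL := hγ.longRootAt hRS hι
  have hγΦ := mem_of_mem_Pos hγL.mem_Pos
  have hsγ := hRS.sref_mem_weyl hγL.mem_Pos
  have hss : ∀ x, sref γ (sref γ x) = x := congrFun (hRS.sref_comp_sref hγΦ)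
  have hinv₁ : ∀ x, wPQ (wPQi x) = x := congrFun hinv.1
  have hinv₂ : ∀ x, wPQi (wPQ x) = x := congrFun hinv.2
  have hinvSet₁ : invSet Φ Δ (sref γ) ⊆ invSet Φ Δ w :=
    hRS.invSet_subset_of_len_comp_add hw.1 hsγ (hRS.sref_comp_sref hγΦ)
      (hRS.sref_comp_sref hγΦ) h1
  have hinvSet₂ : invSet Φ Δ (wPQ ∘ sref γ) ⊆ invSet Φ Δ w :=
    hRS.invSet_subset_of_len_comp_add hw.1
      (comp_mem_weyl (weyl_mono (Finset.erase_subset ι Δ) hwPQ) hsγ)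
      (funext fun x => by simp [hinv₂, hss]) (funext fun x => by simp [hinv₁, hss]) h2
  have hneg : ∀ x ∈ Φ, 0 < ⟪x, γ⟫ → -(w x) ∈ Pos Φ Δ := fun x hx hxγ =>
    hγL.neg_apply_mem_Pos_of_inner_pos hRS hι hmin hw hinvSet₁
      (fun y hy hyγ hsy => hinvSet₂ (mem_invSet_comp_sref_of_inner_pos
        (hRS.inner_self_ne_zero hγΦ) hInvSet hy hyγ hsy)) hx hxγ
  have hwγ := hneg γ hγΦ (hRS.inner_self_pos hγΦ)
  have hle : ⟪θ, θ⟫ ≤ ⟪-(w γ), -(w γ)⟫ := by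
    rw [inner_neg_neg, (hRS.isRootIsometry_of_mem_weyl hw.1).inner_map_map]
    exact hγL.inner_self_le θ (mem_of_mem_Pos hθ.1)
  rw [hRS.eq_of_isHighest_of_inner_nonneg hθ (mem_of_mem_Pos hwγ)
    (fun α hα => hRS.inner_neg_apply_nonneg hw.1 hneg hα) hle, neg_neg]
end
end

section
/- Let g = so(8) (type D_4) act via the standard 8-dimensional representation V. The Frenkel–Gross connection d + f (dq/q) + x_θ dq on the trivial V-bundle over C^×, where f is a principal nilpotent and x_θ a highest-root vector, decomposes into two irreducible flat subbundles of ranks 1 and 7, corresponding to the decomposition of V restricted to the principal G_2 ⊂ so(8) into the trivial and the 7-dimensional representation. -/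
/-- The Frenkel–Gross connection `d + f (dq/q) + x_θ dq` for `so(8)` acting on
its standard `8`-dimensional representation, written in the (Schubert/canonical)
basis: the `q`-dependent connection matrix `f + q·x_θ` (here the connection is
`q d/dq + FGmat q`). -/
noncomputable def FGmat (q : ℂ) : Matrix (Fin 8) (Fin 8) ℂ :=
  !![0,0,0,0,0,0,q,0;
     1,0,0,0,0,0,0,q;
     0,1,0,0,0,0,0,0;
     0,0,1,0,0,0,0,0;
     0,0,1,0,0,0,0,0;
     0,0,0,1,1,0,0,0;
     0,0,0,0,0,1,0,0;
     0,0,0,0,0,0,1,0]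

section FGaux

variable {α : Type*}

@[simp] private lemma v8_0 (a b c d e f g h : α) : (![a,b,c,d,e,f,g,h] : Fin 8 → α) 0 = a := rfl
@[simp] private lemma v8_1 (a b c d e f g h : α) : (![a,b,c,d,e,f,g,h] : Fin 8 → α) 1 = b := rfl
@[simp] private lemma v8_2 (a b c d e f g h : α) : (![a,b,c,d,e,f,g,h] : Fin 8 → α) 2 = c := rfl
@[simp] private lemma v8_3 (a b c d e f g h : α) : (![a,b,c,d,e,f,g,h] : Fin 8 → α) 3 = d := rfl
@[simp] private lemma v8_4 (a b c d e f g h : α) : (![a,b,c,d,e,f,g,h] : Fin 8 → α) 4 = e := rfl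
@[simp] private lemma v8_5 (a b c d e f g h : α) : (![a,b,c,d,e,f,g,h] : Fin 8 → α) 5 = f := rfl
@[simp] private lemma v8_6 (a b c d e f g h : α) : (![a,b,c,d,e,f,g,h] : Fin 8 → α) 6 = g := rfl
@[simp] private lemma v8_7 (a b c d e f g h : α) : (![a,b,c,d,e,f,g,h] : Fin 8 → α) 7 = h := rfl

private lemma FG_mulVec (q : ℂ) (v : Fin 8 → ℂ) :
    (FGmat q).mulVec v = ![q * v 6, v 0 + q * v 7, v 1, v 2, v 2, v 3 + v 4, v 5, v 6] := by
  funext i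
  simp only [Matrix.mulVec, dotProduct, Fin.sum_univ_eight]
  fin_cases i
  · show (0:ℂ)*v 0 + 0*v 1 + 0*v 2 + 0*v 3 + 0*v 4 + 0*v 5 + q*v 6 + 0*v 7 = q * v 6; ring
  · show (1:ℂ)*v 0 + 0*v 1 + 0*v 2 + 0*v 3 + 0*v 4 + 0*v 5 + 0*v 6 + q*v 7 = v 0 + q * v 7; ring
  · show (0:ℂ)*v 0 + 1*v 1 + 0*v 2 + 0*v 3 + 0*v 4 + 0*v 5 + 0*v 6 + 0*v 7 = v 1; ring
  · show (0:ℂ)*v 0 + 0*v 1 + 1*v 2 + 0*v 3 + 0*v 4 + 0*v 5 + 0*v 6 + 0*v 7 = v 2; ring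
  · show (0:ℂ)*v 0 + 0*v 1 + 1*v 2 + 0*v 3 + 0*v 4 + 0*v 5 + 0*v 6 + 0*v 7 = v 2; ring
  · show (0:ℂ)*v 0 + 0*v 1 + 0*v 2 + 1*v 3 + 1*v 4 + 0*v 5 + 0*v 6 + 0*v 7 = v 3 + v 4; ring
  · show (0:ℂ)*v 0 + 0*v 1 + 0*v 2 + 0*v 3 + 0*v 4 + 1*v 5 + 0*v 6 + 0*v 7 = v 5; ring
  · show (0:ℂ)*v 0 + 0*v 1 + 0*v 2 + 0*v 3 + 0*v 4 + 0*v 5 + 1*v 6 + 0*v 7 = v 6; ring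

/-- The functional cutting out the 7-dimensional subrepresentation. -/
noncomputable def FGphi : (Fin 8 → ℂ) →ₗ[ℂ] ℂ :=
  (LinearMap.proj (R := ℂ) (φ := fun _ : Fin 8 => ℂ) 3) -
    (LinearMap.proj (R := ℂ) (φ := fun _ : Fin 8 => ℂ) 4)

private lemma FGphi_apply (v : Fin 8 → ℂ) : FGphi v = v 3 - v 4 := rfl

/-- The spanning vector of the trivial subrepresentation. -/
noncomputable def FGu : Fin 8 → ℂ := ![0,0,0,1,-1,0,0,0]

private lemma FGu_ne_zero : FGu ≠ 0 := by
  intro h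
  have := congrFun h 3
  simp [FGu] at this

private lemma last_mem {W : Submodule ℂ (Fin 8 → ℂ)} {c : ℂ} (hc : c ≠ 0)
    (h : (![0,0,0,0,0,0,0,c] : Fin 8 → ℂ) ∈ W) :
    (![0,0,0,0,0,0,0,1] : Fin 8 → ℂ) ∈ W := by
  have h2 := W.smul_mem c⁻¹ h
  have he : c⁻¹ • (![0,0,0,0,0,0,0,c] : Fin 8 → ℂ) = ![0,0,0,0,0,0,0,1] := by
    funext i
    fin_cases i
    · show c⁻¹ * 0 = 0; ring
    · show c⁻¹ * 0 = 0; ring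
    · show c⁻¹ * 0 = 0; ring
    · show c⁻¹ * 0 = 0; ring
    · show c⁻¹ * 0 = 0; ring
    · show c⁻¹ * 0 = 0; ring
    · show c⁻¹ * 0 = 0; ring
    · show c⁻¹ * c = 1; exact inv_mul_cancel₀ hc
  rwa [he] at h2

private lemma two_ne' {a : ℂ} (ha : a ≠ 0) : a + a ≠ 0 := by
  intro h
  apply ha
  have h2 : (2:ℂ) * a = 0 := by rw [two_mul]; exact h
  exact (mul_eq_zero.1 h2).resolve_left two_ne_zero

end FGaux

/-- The Frenkel–Gross connection for `so(8)` on the standard `8`-dimensional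
representation decomposes as a direct sum of two irreducible flat subbundles,
of ranks `1` and `7` (the restriction of the `8`-dimensional representation to
the principal `G₂ ⊂ so(8)` being `1 ⊕ 7`). -/
theorem stmt13 :
    ∃ U1 U7 : Submodule ℂ (Fin 8 → ℂ),
      Module.finrank ℂ U1 = 1 ∧ Module.finrank ℂ U7 = 7 ∧ IsCompl U1 U7 ∧
      (∀ q : ℂ, ∀ v ∈ U1, (FGmat q).mulVec v ∈ U1) ∧
      (∀ q : ℂ, ∀ v ∈ U7, (FGmat q).mulVec v ∈ U7) ∧
      (∀ W : Submodule ℂ (Fin 8 → ℂ), W ≤ U1 →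
        (∀ q : ℂ, ∀ v ∈ W, (FGmat q).mulVec v ∈ W) → W = ⊥ ∨ W = U1) ∧
      (∀ W : Submodule ℂ (Fin 8 → ℂ), W ≤ U7 →
        (∀ q : ℂ, ∀ v ∈ W, (FGmat q).mulVec v ∈ W) → W = ⊥ ∨ W = U7) := by
  refine ⟨ℂ ∙ FGu, LinearMap.ker FGphi, ?_, ?_, ?_, ?_, ?_, ?_, ?_⟩
  · exact finrank_span_singleton FGu_ne_zero
  · -- rank 7
    have hr : LinearMap.range FGphi = ⊤ := by
      rw [LinearMap.range_eq_top]
      intro c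
      refine ⟨![0,0,0,c,0,0,0,0], ?_⟩
      rw [FGphi_apply]; simp
    have h := LinearMap.finrank_range_add_finrank_ker FGphi
    rw [hr, finrank_top, Module.finrank_fin_fun, Module.finrank_self] at h
    omega
  · -- IsCompl
    have hdis : Disjoint (ℂ ∙ FGu) (LinearMap.ker FGphi) := by
      rw [Submodule.disjoint_def]
      intro x hx1 hx2
      obtain ⟨c, rfl⟩ := Submodule.mem_span_singleton.1 hx1
      rw [LinearMap.mem_ker, map_smul, FGphi_apply] at hx2
      have : FGu 3 - FGu 4 = 2 := by simp [FGu]; norm_num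
      rw [smul_eq_mul, this] at hx2
      have hc : c = 0 := by
        rcases mul_eq_zero.1 hx2 with h | h
        · exact h
        · norm_num at h
      rw [hc, zero_smul]
    refine ⟨hdis, ?_⟩
    rw [codisjoint_iff]
    have h := Submodule.finrank_sup_add_finrank_inf_eq (ℂ ∙ FGu) (LinearMap.ker FGphi)
    rw [hdis.eq_bot, finrank_bot] at h
    have h1 : Module.finrank ℂ (ℂ ∙ FGu) = 1 := finrank_span_singleton FGu_ne_zero
    have h7 : Module.finrank ℂ (LinearMap.ker FGphi) = 7 := by
      have hr : LinearMap.range FGphi = ⊤ := by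
        rw [LinearMap.range_eq_top]
        intro c
        refine ⟨![0,0,0,c,0,0,0,0], ?_⟩
        rw [FGphi_apply]; simp
      have h := LinearMap.finrank_range_add_finrank_ker FGphi
      rw [hr, finrank_top, Module.finrank_fin_fun, Module.finrank_self] at h
      omega
    apply Submodule.eq_top_of_finrank_eq
    rw [Module.finrank_fin_fun]
    omega
  · -- invariance of U1
    intro q v hv
    obtain ⟨c, rfl⟩ := Submodule.mem_span_singleton.1 hv
    rw [Matrix.mulVec_smul]
    have h0 : (FGmat q).mulVec FGu = 0 := by
      rw [FG_mulVec]
      funext i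
      fin_cases i <;> simp [FGu]
    rw [h0, smul_zero]
    exact Submodule.zero_mem _
  · -- invariance of U7
    intro q v hv
    rw [LinearMap.mem_ker, FGphi_apply] at hv ⊢
    rw [FG_mulVec]
    simp
  · -- U1 irreducible
    intro W hle _
    by_cases hW : W = ⊥
    · exact Or.inl hW
    right
    obtain ⟨x, hxW, hx0⟩ := (Submodule.ne_bot_iff W).1 hW
    obtain ⟨c, rfl⟩ := Submodule.mem_span_singleton.1 (hle hxW)
    have hc : c ≠ 0 := by rintro rfl; exact hx0 (zero_smul ℂ FGu)
    have hu : FGu ∈ W := by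
      have := W.smul_mem c⁻¹ hxW
      rwa [smul_smul, inv_mul_cancel₀ hc, one_smul] at this
    refine le_antisymm hle ?_
    rw [Submodule.span_le, Set.singleton_subset_iff]
    exact hu
  · -- U7 irreducible
    intro W hle hinv
    by_cases hW : W = ⊥
    · exact Or.inl hW
    right
    obtain ⟨v, hvW, hv0⟩ := (Submodule.ne_bot_iff W).1 hW
    have hv34 : v 3 = v 4 := by
      have := hle hvW
      rw [LinearMap.mem_ker, FGphi_apply] at this
      exact sub_eq_zero.1 this
    -- f-step and x_θ-step
    have hf : ∀ x, x ∈ W →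
        (![0, x 0, x 1, x 2, x 2, x 3 + x 4, x 5, x 6] : Fin 8 → ℂ) ∈ W := by
      intro x hx
      have h := hinv 0 x hx
      rw [FG_mulVec] at h
      simpa using h
    have hX : ∀ x, x ∈ W →
        (![x 6, x 0 + x 7, x 1, x 2, x 2, x 3 + x 4, x 5, x 6] : Fin 8 → ℂ) ∈ W := by
      intro x hx
      have h := hinv 1 x hx
      rw [FG_mulVec] at h
      simpa using h
    -- iterated f applied to v
    have hw1 : (![0, v 0, v 1, v 2, v 2, v 3 + v 4, v 5, v 6] : Fin 8 → ℂ) ∈ W := hf v hvW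
    have hw2 : (![0, 0, v 0, v 1, v 1, v 2 + v 2, v 3 + v 4, v 5] : Fin 8 → ℂ) ∈ W := by
      simpa using hf _ hw1
    have hw3 : (![0, 0, 0, v 0, v 0, v 1 + v 1, v 2 + v 2, v 3 + v 4] : Fin 8 → ℂ) ∈ W := by
      simpa using hf _ hw2
    have hw4 : (![0, 0, 0, 0, 0, v 0 + v 0, v 1 + v 1, v 2 + v 2] : Fin 8 → ℂ) ∈ W := by
      simpa using hf _ hw3
    have hw5 : (![0, 0, 0, 0, 0, 0, v 0 + v 0, v 1 + v 1] : Fin 8 → ℂ) ∈ W := by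
      simpa using hf _ hw4
    have hw6 : (![0, 0, 0, 0, 0, 0, 0, v 0 + v 0] : Fin 8 → ℂ) ∈ W := by
      simpa using hf _ hw5
    -- e7 ∈ W
    have he7 : (![0,0,0,0,0,0,0,1] : Fin 8 → ℂ) ∈ W := by
      by_cases h0 : v 0 = 0
      · by_cases h1 : v 1 = 0
        · by_cases h2 : v 2 = 0
          · by_cases h3 : v 3 = 0
            · have h4 : v 4 = 0 := by rw [← hv34]; exact h3
              by_cases h5 : v 5 = 0
              · by_cases h6 : v 6 = 0
                · have h7 : v 7 ≠ 0 := by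
                    intro h7
                    apply hv0
                    funext i
                    fin_cases i
                    · exact h0
                    · exact h1
                    · exact h2
                    · exact h3
                    · exact h4
                    · exact h5
                    · exact h6
                    · exact h7
                  have hv' : v = ![0,0,0,0,0,0,0, v 7] := by
                    funext i
                    fin_cases i <;> simp [h0, h1, h2, h3, h4, h5, h6]
                  exact last_mem h7 (hv' ▸ hvW)
                · exact last_mem h6 (by simpa [h0, h1, h2, h3, h4, h5] using hw1)
              · exact last_mem h5 (by simpa [h0, h1, h2, h3, h4] using hw2)
            · have hc : v 3 + v 4 ≠ 0 := by rw [← hv34]; exact two_ne' h3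
              exact last_mem hc (by simpa [h0, h1, h2] using hw3)
          · exact last_mem (two_ne' h2) (by simpa [h0, h1] using hw4)
        · exact last_mem (two_ne' h1) (by simpa [h0] using hw5)
      · exact last_mem (two_ne' h0) hw6
    -- generate the rest of a basis of U7
    have he1 : (![0,1,0,0,0,0,0,0] : Fin 8 → ℂ) ∈ W := by simpa using hX _ he7
    have he2 : (![0,0,1,0,0,0,0,0] : Fin 8 → ℂ) ∈ W := by simpa using hf _ he1
    have he34 : (![0,0,0,1,1,0,0,0] : Fin 8 → ℂ) ∈ W := by simpa using hf _ he2
    have he5' : (![0,0,0,0,0,(1:ℂ)+1,0,0] : Fin 8 → ℂ) ∈ W := by simpa using hf _ he34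
    have he5 : (![0,0,0,0,0,1,0,0] : Fin 8 → ℂ) ∈ W := by
      have h2 := W.smul_mem (2:ℂ)⁻¹ he5'
      have he : (2:ℂ)⁻¹ • (![0,0,0,0,0,(1:ℂ)+1,0,0] : Fin 8 → ℂ) = ![0,0,0,0,0,1,0,0] := by
        funext i
        fin_cases i
        · show (2:ℂ)⁻¹ * 0 = 0; ring
        · show (2:ℂ)⁻¹ * 0 = 0; ring
        · show (2:ℂ)⁻¹ * 0 = 0; ring
        · show (2:ℂ)⁻¹ * 0 = 0; ring
        · show (2:ℂ)⁻¹ * 0 = 0; ring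
        · show (2:ℂ)⁻¹ * (1+1) = 1; norm_num
        · show (2:ℂ)⁻¹ * 0 = 0; ring
        · show (2:ℂ)⁻¹ * 0 = 0; ring
      rwa [he] at h2
    have he6 : (![0,0,0,0,0,0,1,0] : Fin 8 → ℂ) ∈ W := by simpa using hf _ he5
    have he0 : (![1,0,0,0,0,0,0,0] : Fin 8 → ℂ) ∈ W := by
      have h := hX _ he6
      simp only [v8_0, v8_1, v8_2, v8_3, v8_4, v8_5, v8_6, v8_7, add_zero, zero_add] at h
      have h2 := W.sub_mem h he7
      have he : (![(1:ℂ),0,0,0,0,0,0,1] : Fin 8 → ℂ) - ![0,0,0,0,0,0,0,1] = ![1,0,0,0,0,0,0,0] := by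
        funext i
        fin_cases i
        · show (1:ℂ) - 0 = 1; ring
        · show (0:ℂ) - 0 = 0; ring
        · show (0:ℂ) - 0 = 0; ring
        · show (0:ℂ) - 0 = 0; ring
        · show (0:ℂ) - 0 = 0; ring
        · show (0:ℂ) - 0 = 0; ring
        · show (0:ℂ) - 0 = 0; ring
        · show (1:ℂ) - 1 = 0; ring
      rwa [he] at h2
    -- conclude W = U7
    refine le_antisymm hle ?_
    intro w hw
    have hw34 : w 3 = w 4 := by
      rw [LinearMap.mem_ker, FGphi_apply] at hw
      exact sub_eq_zero.1 hw
    have hrep : w = w 0 • (![1,0,0,0,0,0,0,0] : Fin 8 → ℂ) + w 1 • ![0,1,0,0,0,0,0,0]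
        + w 2 • ![0,0,1,0,0,0,0,0] + w 3 • ![0,0,0,1,1,0,0,0] + w 5 • ![0,0,0,0,0,1,0,0]
        + w 6 • ![0,0,0,0,0,0,1,0] + w 7 • ![0,0,0,0,0,0,0,1] := by
      funext i
      fin_cases i
      · show w 0 = w 0 * 1 + w 1 * 0 + w 2 * 0 + w 3 * 0 + w 5 * 0 + w 6 * 0 + w 7 * 0; ring
      · show w 1 = w 0 * 0 + w 1 * 1 + w 2 * 0 + w 3 * 0 + w 5 * 0 + w 6 * 0 + w 7 * 0; ring
      · show w 2 = w 0 * 0 + w 1 * 0 + w 2 * 1 + w 3 * 0 + w 5 * 0 + w 6 * 0 + w 7 * 0; ring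
      · show w 3 = w 0 * 0 + w 1 * 0 + w 2 * 0 + w 3 * 1 + w 5 * 0 + w 6 * 0 + w 7 * 0; ring
      · show w 4 = w 0 * 0 + w 1 * 0 + w 2 * 0 + w 3 * 1 + w 5 * 0 + w 6 * 0 + w 7 * 0
        rw [← hw34]; ring
      · show w 5 = w 0 * 0 + w 1 * 0 + w 2 * 0 + w 3 * 0 + w 5 * 1 + w 6 * 0 + w 7 * 0; ring
      · show w 6 = w 0 * 0 + w 1 * 0 + w 2 * 0 + w 3 * 0 + w 5 * 0 + w 6 * 1 + w 7 * 0; ring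
      · show w 7 = w 0 * 0 + w 1 * 0 + w 2 * 0 + w 3 * 0 + w 5 * 0 + w 6 * 0 + w 7 * 1; ring
    rw [hrep]
    exact add_mem (add_mem (add_mem (add_mem (add_mem (add_mem
      (W.smul_mem _ he0) (W.smul_mem _ he1)) (W.smul_mem _ he2)) (W.smul_mem _ he34))
      (W.smul_mem _ he5)) (W.smul_mem _ he6)) (W.smul_mem _ he7)
end
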